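/- arXiv:1009.1909 — 3 statements merged into one kernel-verified Lean document; each statement's English description precedes it below -/
import Mathlib

section
/- Suppose Ψ satisfies Assumption 1. Let C > 0, let (w*, u*) solve the KKT system, and let (w, u) solve the perturbed KKT system with parameters μ > 0 and v ∈ ℝ^{n−1} satisfying ‖v‖_∞ < Cμ. Then ∑_{i=1}^n w*_i / w_i + ∑_{i=1}^n u*_i / u_i ≤ 2C + n, and consequently w_i ≥ w*_i/(2C+n) and u_i ≥ u*_i/(2C+n) for every i = 1, …, n. -/
/-!
For every left inverse `L` of `K`, `L M Lᵀ - (Kᵀ M⁻¹ K)⁻¹ = (L - L₀) M (L - L₀)ᵀ ⪰ 0` where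
`L₀ = (Kᵀ M⁻¹ K)⁻¹ Kᵀ M⁻¹`. Taking for `L` the `L₀` of `a M₁ + b M₂` and applying this to `M₁` and
`M₂` shows that `M ↦ (Kᵀ M⁻¹ K)⁻¹` is concave in the Loewner order; as `Ψ` is convex and
decreasing, `F(w) = Ψ((Kᵀ M(w)⁻¹ K)⁻¹)` is convex, so its gradient is monotone:
`⟪g(w*), w - w*⟫ ≤ ⟪g(w), w - w*⟫`. Substituting both KKT systems (with `∑ w = ∑ w* = 1`,
`u*ᵢ w*ᵢ = 0`, `uᵢ wᵢ = μ`, `|vᵢ| < Cμ`) gives `∑ uᵢ w*ᵢ + ∑ u*ᵢ wᵢ ≤ (2C + n) μ`, and since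
`uᵢ wᵢ = μ` the left side is `μ (∑ w*ᵢ / wᵢ + ∑ u*ᵢ / uᵢ)`.
-/

open Matrix Filter Topology

noncomputable section

attribute [local instance] Matrix.normedAddCommGroup Matrix.normedSpace

/-- Assumption 1: `Ψ` is convex, decreasing, twice continuously differentiable and bounded
below on the set of `k × k` real symmetric positive definite matrices, and `Ψ (X j) → ∞`
whenever `(X j)` is a bounded sequence of positive definite matrices whose smallest
eigenvalues tend to `0`.  (Over `ℝ`, `Matrix.PosDef` includes symmetry.) -/
structure Assumption1 (k : ℕ) (Ψ : Matrix (Fin k) (Fin k) ℝ → ℝ) : Prop where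
  convex : ∀ A B : Matrix (Fin k) (Fin k) ℝ, A.PosDef → B.PosDef →
    ∀ t : ℝ, 0 ≤ t → t ≤ 1 → Ψ (t • A + (1 - t) • B) ≤ t * Ψ A + (1 - t) * Ψ B
  decreasing : ∀ A B : Matrix (Fin k) (Fin k) ℝ, A.IsHermitian → B.PosDef →
    (A - B).PosSemidef → Ψ A ≤ Ψ B
  smooth : ContDiffOn ℝ 2 Ψ {U : Matrix (Fin k) (Fin k) ℝ | U.PosDef}
  bddBelow : ∃ c : ℝ, ∀ U : Matrix (Fin k) (Fin k) ℝ, U.PosDef → c ≤ Ψ U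
  blowup : ∀ (X : ℕ → Matrix (Fin k) (Fin k) ℝ) (hp : ∀ j, (X j).PosDef),
    (∃ C : ℝ, ∀ j i l, |X j i l| ≤ C) →
    Tendsto (fun j => ⨅ i, (hp j).isHermitian.eigenvalues i) atTop (𝓝 0) →
    Tendsto (fun j => Ψ (X j)) atTop atTop

/-- The simplex of designs. -/
def Omega (n : ℕ) : Set (Fin n → ℝ) := {w | (∀ i, 0 ≤ w i) ∧ ∑ i, w i = 1}

/-- The moment matrix `M(w) = ∑ i, w i • A i`. -/
def Mmat {n m : ℕ} (A : Fin n → Matrix (Fin m) (Fin m) ℝ) (w : Fin n → ℝ) :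
    Matrix (Fin m) (Fin m) ℝ := ∑ i, w i • A i

/-- `Range K ⊆ Range X`. -/
def RangeIncl {m k : ℕ} (K : Matrix (Fin m) (Fin k) ℝ) (X : Matrix (Fin m) (Fin m) ℝ) : Prop :=
  LinearMap.range (Matrix.toLin' K) ≤ LinearMap.range (Matrix.toLin' X)

/-- `Φ̂(X) = inf {Ψ U | U symmetric positive definite, X - K U Kᵀ positive semidefinite}`. -/
def PhiHat {m k : ℕ} (K : Matrix (Fin m) (Fin k) ℝ) (Ψ : Matrix (Fin k) (Fin k) ℝ → ℝ)
    (X : Matrix (Fin m) (Fin m) ℝ) : ℝ :=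
  sInf {y | ∃ U : Matrix (Fin k) (Fin k) ℝ, U.PosDef ∧ (X - K * U * Kᵀ).PosSemidef ∧ y = Ψ U}

/-- The optimal value `f*` of the design problem. -/
def fstar {n m k : ℕ} (A : Fin n → Matrix (Fin m) (Fin m) ℝ) (K : Matrix (Fin m) (Fin k) ℝ)
    (Ψ : Matrix (Fin k) (Fin k) ℝ → ℝ) : ℝ :=
  sInf {y | ∃ w ∈ Omega n, RangeIncl K (Mmat A w) ∧ y = PhiHat K Ψ (Mmat A w)}

/-- `w` is an optimal solution of the design problem. -/
def IsOptimal {n m k : ℕ} (A : Fin n → Matrix (Fin m) (Fin m) ℝ) (K : Matrix (Fin m) (Fin k) ℝ)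
    (Ψ : Matrix (Fin k) (Fin k) ℝ → ℝ) (w : Fin n → ℝ) : Prop :=
  w ∈ Omega n ∧ RangeIncl K (Mmat A w) ∧ PhiHat K Ψ (Mmat A w) = fstar A K Ψ

/-- The open domain `D` of the barrier subproblem. -/
def Dset (n : ℕ) : Set (Fin (n - 1) → ℝ) := {wt | (∀ i, 0 < wt i) ∧ ∑ i, wt i < 1}

/-- `w(w̃) = (w̃₁, …, w̃_{n-1}, 1 - ∑ w̃ᵢ)`. -/
def extendW (n : ℕ) (wt : Fin (n - 1) → ℝ) : Fin n → ℝ :=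
  fun i => if h : (i : ℕ) < n - 1 then wt ⟨i, h⟩ else 1 - ∑ j, wt j

/-- The log-barrier function `f_μ`. -/
def fmu {n m k : ℕ} (A : Fin n → Matrix (Fin m) (Fin m) ℝ) (K : Matrix (Fin m) (Fin k) ℝ)
    (Ψ : Matrix (Fin k) (Fin k) ℝ → ℝ) (μ : ℝ) (wt : Fin (n - 1) → ℝ) : ℝ :=
  Ψ ((Kᵀ * (Mmat A (extendW n wt))⁻¹ * K)⁻¹)
    - μ * ∑ i, Real.log (wt i) - μ * Real.log (1 - ∑ i, wt i)

theorem convex_setOf_posDef {m : Type*} [Fintype m] : Convex ℝ {M : Matrix m m ℝ | M.PosDef} := by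
  intro M₁ h₁ M₂ h₂ a b ha hb hab
  rcases ha.eq_or_lt with rfl | ha
  · simpa [show b = 1 by linarith] using h₂
  · exact (h₁.smul ha).add_posSemidef (h₂.posSemidef.smul hb)

theorem Matrix.mulVec_injective_of_rank_eq {m : Type*} [Fintype m] {n : ℕ}
    {K : Matrix m (Fin n) ℝ} (hK : K.rank = n) : Function.Injective K.mulVec := by
  have hrn := LinearMap.finrank_range_add_finrank_ker K.mulVecLin
  rw [show Module.finrank ℝ (LinearMap.range K.mulVecLin) = n from hK,
    Module.finrank_fin_fun] at hrn
  exact LinearMap.ker_eq_bot.mp (Submodule.finrank_eq_zero.mp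
    (by omega : Module.finrank ℝ (LinearMap.ker K.mulVecLin) = 0))

theorem Matrix.PosDef.transpose_mul_mul_same {m k : Type*} [Fintype m] [Fintype k]
    {K : Matrix m k ℝ} {M : Matrix m m ℝ} (hM : M.PosDef) (hK : Function.Injective K.mulVec) :
    (Kᵀ * M * K).PosDef := by
  simpa [conjTranspose_eq_transpose_of_trivial] using hM.conjTranspose_mul_mul_same hK

section LeftInverse

variable {m k : Type*} [Fintype m] [Fintype k] [DecidableEq k]
  {K N : Matrix m k ℝ} {M : Matrix m m ℝ} {U : Matrix k k ℝ}

theorem transpose_mul_mul_eq_of_mul_eq (hMN : M * N = K * U) (hKN : Kᵀ * N = 1) :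
    Nᵀ * M * N = U := by
  rw [Matrix.mul_assoc, hMN, ← Matrix.mul_assoc, ← transpose_transpose K, ← transpose_mul, hKN,
    transpose_one, Matrix.one_mul]

theorem sub_transpose_mul_mul_sub_eq {L : Matrix k m ℝ} (hM : M.IsSymm) (hU : U.IsSymm)
    (hMN : M * N = K * U) (hKN : Kᵀ * N = 1) (hLK : L * K = 1) :
    (L - Nᵀ) * M * (L - Nᵀ)ᵀ = L * M * Lᵀ - U := by
  have hLMN : L * M * N = U := by
    rw [Matrix.mul_assoc, hMN, ← Matrix.mul_assoc, hLK, Matrix.one_mul]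
  have hNML : Nᵀ * M * Lᵀ = U := by
    rw [← hU.eq, ← hLMN, transpose_mul, transpose_mul, hM.eq, Matrix.mul_assoc]
  simp only [transpose_sub, transpose_transpose, Matrix.mul_sub, Matrix.sub_mul, hLMN, hNML,
    transpose_mul_mul_eq_of_mul_eq hMN hKN]
  abel

end LeftInverse

section InformationMatrix

variable {m k : Type*} [Fintype m] [DecidableEq m] [Fintype k] [DecidableEq k]

def infoMatrix (K : Matrix m k ℝ) (M : Matrix m m ℝ) : Matrix k k ℝ := (Kᵀ * M⁻¹ * K)⁻¹

variable {K : Matrix m k ℝ} {M M₁ M₂ : Matrix m m ℝ}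

theorem infoMatrix_posDef (hM : M.PosDef) (hK : Function.Injective K.mulVec) :
    (infoMatrix K M).PosDef :=
  (hM.inv.transpose_mul_mul_same hK).inv

theorem exists_mul_eq_mul_infoMatrix (hM : M.PosDef) (hK : Function.Injective K.mulVec) :
    ∃ N : Matrix m k ℝ, M * N = K * infoMatrix K M ∧ Kᵀ * N = 1 := by
  refine ⟨M⁻¹ * K * infoMatrix K M, ?_, ?_⟩
  · rw [Matrix.mul_assoc, Matrix.mul_nonsing_inv_cancel_left _ _ hM.det_pos.ne'.isUnit]
  · rw [← Matrix.mul_assoc, ← Matrix.mul_assoc, infoMatrix,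
      Matrix.mul_nonsing_inv _ (hM.inv.transpose_mul_mul_same hK).det_pos.ne'.isUnit]

theorem infoMatrix_le_mul_mul_transpose (hM : M.PosDef) (hK : Function.Injective K.mulVec)
    {L : Matrix k m ℝ} (hLK : L * K = 1) :
    (L * M * Lᵀ - infoMatrix K M).PosSemidef := by
  obtain ⟨N, hMN, hKN⟩ := exists_mul_eq_mul_infoMatrix hM hK
  rw [← sub_transpose_mul_mul_sub_eq (isHermitian_iff_isSymm.mp hM.isHermitian)
    (isHermitian_iff_isSymm.mp (infoMatrix_posDef hM hK).isHermitian) hMN hKN hLK]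
  simpa [conjTranspose_eq_transpose_of_trivial] using
    hM.posSemidef.mul_mul_conjTranspose_same (L - Nᵀ)

theorem infoMatrix_concave (h₁ : M₁.PosDef) (h₂ : M₂.PosDef) (hK : Function.Injective K.mulVec)
    {a b : ℝ} (ha : 0 ≤ a) (hb : 0 ≤ b) (hab : a + b = 1) :
    (infoMatrix K (a • M₁ + b • M₂) - (a • infoMatrix K M₁ + b • infoMatrix K M₂)).PosSemidef := by
  obtain ⟨N, hMN, hKN⟩ := exists_mul_eq_mul_infoMatrix (convex_setOf_posDef h₁ h₂ ha hb hab) hK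
  have hNK : Nᵀ * K = 1 := by
    rw [← transpose_transpose K, ← transpose_mul, hKN, transpose_one]
  have hsplit : infoMatrix K (a • M₁ + b • M₂) - (a • infoMatrix K M₁ + b • infoMatrix K M₂) =
      a • (Nᵀ * M₁ * Nᵀᵀ - infoMatrix K M₁) + b • (Nᵀ * M₂ * Nᵀᵀ - infoMatrix K M₂) := by
    rw [← transpose_mul_mul_eq_of_mul_eq hMN hKN]
    simp only [transpose_transpose, Matrix.mul_add, Matrix.add_mul, Matrix.mul_smul,
      Matrix.smul_mul, smul_sub]
    abel
  rw [hsplit]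
  exact ((infoMatrix_le_mul_mul_transpose h₁ hK hNK).smul ha).add
    ((infoMatrix_le_mul_mul_transpose h₂ hK hNK).smul hb)

end InformationMatrix

theorem convexOn_comp_infoMatrix {m k : Type*} [Fintype m] [DecidableEq m] [Fintype k]
    [DecidableEq k] {K : Matrix m k ℝ} (hK : Function.Injective K.mulVec)
    {Ψ : Matrix k k ℝ → ℝ} (hconv : ConvexOn ℝ {U | U.PosDef} Ψ)
    (hdec : ∀ A B : Matrix k k ℝ, A.IsHermitian → B.PosDef → (A - B).PosSemidef → Ψ A ≤ Ψ B) :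
    ConvexOn ℝ {M | M.PosDef} (fun M => Ψ (infoMatrix K M)) := by
  refine ⟨convex_setOf_posDef, fun M₁ h₁ M₂ h₂ a b ha hb hab => ?_⟩
  have hU₁ := infoMatrix_posDef h₁ hK
  have hU₂ := infoMatrix_posDef h₂ hK
  exact (hdec _ _ (infoMatrix_posDef (convex_setOf_posDef h₁ h₂ ha hb hab) hK).isHermitian
    (convex_setOf_posDef hU₁ hU₂ ha hb hab) (infoMatrix_concave h₁ h₂ hK ha hb hab)).trans
    (hconv.2 hU₁ hU₂ ha hb hab)

theorem Assumption1.convexOn {k : ℕ} {Ψ : Matrix (Fin k) (Fin k) ℝ → ℝ} (hΨ : Assumption1 k Ψ) :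
    ConvexOn ℝ {U | U.PosDef} Ψ := by
  refine ⟨convex_setOf_posDef, fun A hA B hB a b ha hb hab => ?_⟩
  obtain rfl : b = 1 - a := by linarith
  exact hΨ.convex A B hA hB a ha (by linarith)

theorem Mmat_eq_linearCombination {n m : ℕ} (A : Fin n → Matrix (Fin m) (Fin m) ℝ) :
    Mmat A = Fintype.linearCombination ℝ A := by
  ext1 w
  rw [Fintype.linearCombination_apply, Mmat]

theorem Mmat_posDef_of_pos {n m : ℕ} {A : Fin n → Matrix (Fin m) (Fin m) ℝ}
    (hA : ∀ i, (A i).PosSemidef) {w₀ w : Fin n → ℝ}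
    (hM₀ : (Mmat A w₀).PosDef) (hw : ∀ i, 0 < w i) : (Mmat A w).PosDef := by
  obtain ⟨c, hcw, hc⟩ : ∃ c : ℝ, (∀ i, c * w₀ i < w i) ∧ 0 < c := by
    have : ∀ᶠ c in 𝓝[>] (0 : ℝ), ∀ i, c * w₀ i < w i := by
      refine Filter.eventually_all.2 fun i => nhdsWithin_le_nhds ?_
      exact (continuous_id.mul continuous_const).continuousAt.eventually_lt
        continuousAt_const (by simpa using hw i)
    exact (this.and self_mem_nhdsWithin).exists
  have hsplit : Mmat A w = c • Mmat A w₀ + Mmat A (w - c • w₀) := by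
    simp only [Mmat_eq_linearCombination, map_sub, map_smul, add_sub_cancel]
  rw [hsplit]
  refine (hM₀.smul hc).add_posSemidef (posSemidef_sum _ fun i _ => (hA i).smul ?_)
  simpa using (hcw i).le

theorem ConvexOn.apply_sub_le_of_hasFDerivAt {E : Type*} [NormedAddCommGroup E]
    [NormedSpace ℝ E] {s : Set E} {f : E → ℝ} (hf : ConvexOn ℝ s f) {x y : E} (hx : x ∈ s)
    (hy : y ∈ s) {f'x f'y : E →L[ℝ] ℝ} (hfx : HasFDerivAt f f'x x) (hfy : HasFDerivAt f f'y y) :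
    f'x (y - x) ≤ f'y (y - x) := by
  set ℓ : ℝ →ᵃ[ℝ] E := AffineMap.lineMap x y
  have hφ : ConvexOn ℝ (ℓ ⁻¹' s) (f ∘ ℓ) := hf.comp_affineMap ℓ
  have h0 : (0 : ℝ) ∈ ℓ ⁻¹' s := by simpa [ℓ] using hx
  have h1 : (1 : ℝ) ∈ ℓ ⁻¹' s := by simpa [ℓ] using hy
  have hd0 : HasDerivAt (f ∘ ℓ) (f'x (y - x)) 0 :=
    (by simpa [ℓ] using hfx : HasFDerivAt f f'x (ℓ 0)).comp_hasDerivAt 0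
      AffineMap.hasDerivAt_lineMap
  have hd1 : HasDerivAt (f ∘ ℓ) (f'y (y - x)) 1 :=
    (by simpa [ℓ] using hfy : HasFDerivAt f f'y (ℓ 1)).comp_hasDerivAt 1
      AffineMap.hasDerivAt_lineMap
  exact (hφ.le_slope_of_hasDerivAt h0 h1 zero_lt_one hd0).trans
    (hφ.slope_le_of_hasDerivAt h0 h1 zero_lt_one hd1)

theorem sum_mul_sub_le_of_hasFDerivAt_Mmat {n m k : ℕ} {A : Fin n → Matrix (Fin m) (Fin m) ℝ}
    {K : Matrix (Fin m) (Fin k) ℝ} (hK : Function.Injective K.mulVec)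
    {Ψ : Matrix (Fin k) (Fin k) ℝ → ℝ} (hconv : ConvexOn ℝ {U | U.PosDef} Ψ)
    (hdec : ∀ A B : Matrix (Fin k) (Fin k) ℝ, A.IsHermitian → B.PosDef → (A - B).PosSemidef →
      Ψ A ≤ Ψ B)
    {g : (Fin n → ℝ) → Fin n → ℝ}
    (hg : ∀ w : Fin n → ℝ, (Mmat A w).PosDef →
      HasFDerivAt (fun z => Ψ ((Kᵀ * (Mmat A z)⁻¹ * K)⁻¹))
        (∑ i, g w i • ContinuousLinearMap.proj (R := ℝ) (φ := fun _ : Fin n => ℝ) i) w)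
    {x y : Fin n → ℝ} (hx : (Mmat A x).PosDef) (hy : (Mmat A y).PosDef) :
    ∑ i, g x i * (y i - x i) ≤ ∑ i, g y i * (y i - x i) := by
  have hF : ConvexOn ℝ (Mmat A ⁻¹' {M | M.PosDef})
      (fun z => Ψ ((Kᵀ * (Mmat A z)⁻¹ * K)⁻¹)) := by
    rw [Mmat_eq_linearCombination]
    exact (convexOn_comp_infoMatrix hK hconv hdec).comp_linearMap _
  simpa only [_root_.sum_apply, _root_.smul_apply, ContinuousLinearMap.proj_apply, Pi.sub_apply,
    smul_eq_mul] using hF.apply_sub_le_of_hasFDerivAt hx hy (hg x hx) (hg y hy)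

section Sums

open Finset

variable {ι : Type*} [Fintype ι]

theorem sum_mul_sub_eq_of_sub_eq_add {g u e x y : ι → ℝ} {c : ℝ} (hg : ∀ i, g i - u i = c + e i)
    (hxy : ∑ i, x i = ∑ i, y i) :
    ∑ i, g i * (x i - y i) = ∑ i, e i * (x i - y i) + (∑ i, u i * x i - ∑ i, u i * y i) := by
  have hg' : ∀ i, g i = c + e i + u i := fun i => by linarith [hg i]
  simp only [hg', add_mul, mul_sub, sum_add_distrib, sum_sub_distrib, ← mul_sum, hxy]
  ring

theorem sum_mul_sub_le_of_abs_le {e x y : ι → ℝ} {c : ℝ} (he : ∀ i, |e i| ≤ c)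
    (hx : ∀ i, 0 ≤ x i) (hy : ∀ i, 0 ≤ y i) :
    ∑ i, e i * (x i - y i) ≤ c * (∑ i, x i + ∑ i, y i) := by
  rw [← sum_add_distrib, mul_sum]
  refine sum_le_sum fun i _ => ?_
  have hxy : |x i - y i| ≤ x i + y i := abs_sub_le_iff.2 ⟨by linarith [hy i], by linarith [hx i]⟩
  calc e i * (x i - y i) ≤ |e i| * |x i - y i| := (le_abs_self _).trans (abs_mul _ _).le
    _ ≤ c * (x i + y i) := mul_le_mul (he i) hxy (abs_nonneg _) ((abs_nonneg _).trans (he i))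

theorem sum_div_eq_sum_mul_div {x w u : ι → ℝ} {μ : ℝ} (huw : ∀ i, u i * w i = μ)
    (hu : ∀ i, u i ≠ 0) : ∑ i, x i / w i = (∑ i, u i * x i) / μ := by
  rw [sum_div]
  exact sum_congr rfl fun i _ => by rw [← huw i, mul_div_mul_left _ _ (hu i)]

theorem div_le_of_sum_div_le {x y : ι → ℝ} {B : ℝ} (hx : ∀ i, 0 ≤ x i) (hy : ∀ i, 0 < y i)
    (h : ∑ i, x i / y i ≤ B) (i : ι) : x i / B ≤ y i := by
  have hxy : 0 ≤ x i / y i := div_nonneg (hx i) (hy i).le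
  have hi : x i / y i ≤ B :=
    (single_le_sum (fun j _ => div_nonneg (hx j) (hy j).le) (mem_univ i)).trans h
  rcases (hxy.trans hi).eq_or_lt with rfl | hB
  · simpa using (hy i).le
  · exact (div_le_comm₀ (hy i) hB).mp hi

theorem sum_mul_add_sum_mul_le_of_kkt {g₀ g u₀ u e x₀ x : ι → ℝ} {l₀ l c μ : ℝ}
    (hmono : ∑ i, g₀ i * (x i - x₀ i) ≤ ∑ i, g i * (x i - x₀ i))
    (hg₀ : ∀ i, g₀ i - u₀ i = l₀) (hg : ∀ i, g i - u i = l + e i) (he : ∀ i, |e i| ≤ c)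
    (hx₀ : ∀ i, 0 ≤ x₀ i) (hx : ∀ i, 0 ≤ x i) (hx₀_sum : ∑ i, x₀ i = 1) (hx_sum : ∑ i, x i = 1)
    (hcompl : ∀ i, u₀ i * x₀ i = 0) (hux : ∀ i, u i * x i = μ) :
    ∑ i, u i * x₀ i + ∑ i, x i * u₀ i ≤ 2 * c + Fintype.card ι * μ := by
  have hsum : ∑ i, x i = ∑ i, x₀ i := hx_sum.trans hx₀_sum.symm
  rw [sum_mul_sub_eq_of_sub_eq_add (e := 0) (fun i => by simpa using hg₀ i) hsum,
    sum_mul_sub_eq_of_sub_eq_add hg hsum] at hmono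
  have hperturb := sum_mul_sub_le_of_abs_le he hx hx₀
  simp only [Pi.zero_apply, zero_mul, sum_const_zero, zero_add, hcompl, hux, sum_const,
    card_univ, nsmul_eq_mul] at hmono
  simp only [hx_sum, hx₀_sum, mul_comm (x _)] at hperturb ⊢
  linarith

end Sums

theorem kkt_perturbed_ratio_bound_general (n m k : ℕ)
    (A : Fin n → Matrix (Fin m) (Fin m) ℝ) (hA : ∀ i, (A i).PosSemidef)
    (K : Matrix (Fin m) (Fin k) ℝ) (hK : K.rank = k)
    (Ψ : Matrix (Fin k) (Fin k) ℝ → ℝ)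
    (hΨ : Assumption1 k Ψ)
    (g : (Fin n → ℝ) → Fin n → ℝ)
    (hg : ∀ w : Fin n → ℝ, (Mmat A w).PosDef →
      HasFDerivAt (fun z => Ψ ((Kᵀ * (Mmat A z)⁻¹ * K)⁻¹))
        (∑ i, g w i • ContinuousLinearMap.proj (R := ℝ) (φ := fun _ : Fin n => ℝ) i) w)
    (wstar ustar : Fin n → ℝ)
    (hKKT : wstar ∈ Omega n ∧ (Mmat A wstar).PosDef ∧ (∀ i, 0 ≤ ustar i) ∧
      (∀ i, ustar i * wstar i = 0) ∧ ∃ lam : ℝ, ∀ i, g wstar i - ustar i = lam)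
    (C : ℝ) (hC : 0 < C) (μ : ℝ) (hμ : 0 < μ) (v : Fin (n - 1) → ℝ)
    (hv : ∀ i, |v i| < C * μ)
    (w u : Fin n → ℝ)
    (hpert : (∀ i, 0 < w i) ∧ (∑ i, w i = 1) ∧ (∀ i, u i * w i = μ) ∧
      ∃ lam : ℝ, ∀ i : Fin n, g w i - u i =
        lam + (if h : (i : ℕ) < n - 1 then v ⟨i, h⟩ else 0)) :
    (∑ i, wstar i / w i + ∑ i, ustar i / u i ≤ 2 * C + n) ∧
      (∀ i, wstar i / (2 * C + n) ≤ w i) ∧ (∀ i, ustar i / (2 * C + n) ≤ u i) := by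
  obtain ⟨⟨hws, hws_sum⟩, hMs, hus, hcompl, lams, hlams⟩ := hKKT
  obtain ⟨hw, hw_sum, huw, lam, hlam⟩ := hpert
  have hu : ∀ i, 0 < u i := fun i => pos_of_mul_pos_left ((huw i).symm ▸ hμ) (hw i).le
  have hmono := sum_mul_sub_le_of_hasFDerivAt_Mmat (K.mulVec_injective_of_rank_eq hK) hΨ.convexOn
    hΨ.decreasing hg hMs (Mmat_posDef_of_pos hA hMs hw)
  have hpair := sum_mul_add_sum_mul_le_of_kkt hmono hlams hlam
    (fun i => by split_ifs; exacts [(hv _).le, by simpa using (mul_pos hC hμ).le])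
    hws (fun i => (hw i).le) hws_sum hw_sum hcompl huw
  have hratio : ∑ i, wstar i / w i + ∑ i, ustar i / u i ≤ 2 * C + n := by
    rw [sum_div_eq_sum_mul_div huw fun i => (hu i).ne',
      sum_div_eq_sum_mul_div (fun i => (mul_comm _ _).trans (huw i)) fun i => (hw i).ne',
      ← add_div, div_le_iff₀ hμ]
    simpa [add_mul, mul_assoc] using hpair
  have hws_ratio := Finset.sum_nonneg fun i (_ : i ∈ Finset.univ) => div_nonneg (hws i) (hw i).le
  have hus_ratio := Finset.sum_nonneg fun i (_ : i ∈ Finset.univ) => div_nonneg (hus i) (hu i).le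
  exact ⟨hratio, div_le_of_sum_div_le hws hw (by linarith),
    div_le_of_sum_div_le hus hu (by linarith)⟩

/-- Bound relating a KKT point and a perturbed KKT point:
`∑ w*_i / w_i + ∑ u*_i / u_i ≤ 2C + n`, hence componentwise lower bounds. -/
theorem kkt_perturbed_ratio_bound (n m k : ℕ) (hn : 2 ≤ n) (hm : 1 ≤ m) (hk : 1 ≤ k) (hkm : k ≤ m)
    (A : Fin n → Matrix (Fin m) (Fin m) ℝ) (hA : ∀ i, (A i).PosSemidef)
    (hex : ∃ w ∈ Omega n, (Mmat A w).PosDef)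
    (K : Matrix (Fin m) (Fin k) ℝ) (hK : K.rank = k)
    (Ψ : Matrix (Fin k) (Fin k) ℝ → ℝ)
    (hΨ : Assumption1 k Ψ)
    (g : (Fin n → ℝ) → Fin n → ℝ)
    (hg : ∀ w : Fin n → ℝ, (Mmat A w).PosDef →
      HasFDerivAt (fun z => Ψ ((Kᵀ * (Mmat A z)⁻¹ * K)⁻¹))
        (∑ i, g w i • ContinuousLinearMap.proj (R := ℝ) (φ := fun _ : Fin n => ℝ) i) w)
    (wstar ustar : Fin n → ℝ)
    (hKKT : wstar ∈ Omega n ∧ (Mmat A wstar).PosDef ∧ (∀ i, 0 ≤ ustar i) ∧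
      (∀ i, ustar i * wstar i = 0) ∧ ∃ lam : ℝ, ∀ i, g wstar i - ustar i = lam)
    (C : ℝ) (hC : 0 < C) (μ : ℝ) (hμ : 0 < μ) (v : Fin (n - 1) → ℝ)
    (hv : ∀ i, |v i| < C * μ)
    (w u : Fin n → ℝ)
    (hpert : (∀ i, 0 < w i) ∧ (∑ i, w i = 1) ∧ (∀ i, u i * w i = μ) ∧
      ∃ lam : ℝ, ∀ i : Fin n, g w i - u i =
        lam + (if h : (i : ℕ) < n - 1 then v ⟨i, h⟩ else 0)) :
    (∑ i, wstar i / w i + ∑ i, ustar i / u i ≤ 2 * C + n) ∧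
      (∀ i, wstar i / (2 * C + n) ≤ w i) ∧ (∀ i, ustar i / (2 * C + n) ≤ u i) :=
  kkt_perturbed_ratio_bound_general n m k A hA K hK Ψ hΨ g hg wstar ustar hKKT C hC μ hμ v hv w u
    hpert
end
end

section
/- Define Φ_D(X) = log det(K^T X^{-1} K) for m×m real symmetric positive definite X. Then for every positive definite X, the quadratic form H ↦ D²Φ_D(X)[H,H] is nonnegative on S^m, it vanishes at H ∈ S^m if and only if K^T X^{-1} H = 0, and the set {H ∈ S^m : D²Φ_D(X)[H,H] = 0} is a linear subspace of S^m of dimension (m−k)(m−k+1)/2; equivalently, the Hessian of Φ_D at X, viewed as a linear map on the m(m+1)/2-dimensional space S^m, has rank m(m+1)/2 − (m−k)(m−k+1)/2. -/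
open Matrix

noncomputable section

/-- The directional derivative formula `DΦ_D(Y)[H] = -tr (Y⁻¹ K (Kᵀ Y⁻¹ K)⁻¹ Kᵀ Y⁻¹ H)` of
the D-criterion. -/
def D1D {m k : ℕ} (K : Matrix (Fin m) (Fin k) ℝ) (Y H : Matrix (Fin m) (Fin m) ℝ) : ℝ :=
  -((Y⁻¹ * K * (Kᵀ * Y⁻¹ * K)⁻¹ * Kᵀ * Y⁻¹ * H).trace)

/-!
Write `Y = X⁻¹`, `A = Kᵀ Y K` and `P = Y K A⁻¹ Kᵀ Y`, so that `DΦ_D(X)[H] = -tr (P H)`.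
Differentiating along `X + tH` gives `D²Φ_D(X)[H,H] = tr (Y·HPH) + tr ((Y - P)·HPH)`.
Both traces are traces of products of positive semidefinite matrices: `HPH = Mᵀ A⁻¹ M` with
`M = Kᵀ Y H`, and `Y - P = (1 - E)ᵀ Y (1 - E)` with `E = K A⁻¹ Kᵀ Y`. Hence the form is
nonnegative, and since `Y` and `A⁻¹` are positive definite it vanishes iff `HPH = 0` iff `M = 0`.

The null space is `{H symmetric : E H = 0}`. The matrix `E` is idempotent of trace `k`, so
`1 - E` is idempotent of rank `m - k` and factors as `U L` with `L U = 1`; then `S ↦ U S Uᵀ`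
is an isomorphism from the symmetric `(m - k) × (m - k)` matrices onto the null space.
-/

section MatrixCalculus

/- Matrices carry no global norm; the operator norm only serves to apply the normed-ring
calculus lemmas, and all statements below involve just the product topology. -/
attribute [local instance] Matrix.linftyOpNormedAddCommGroup Matrix.linftyOpNormedSpace
  Matrix.linftyOpNormedRing Matrix.linftyOpNormedAlgebra

variable {𝕜 : Type*} [RCLike 𝕜] {l m n : Type*} [Fintype l] [Fintype m] [Fintype n] {x : 𝕜}

theorem HasDerivAt.matrix_mul {f : 𝕜 → Matrix l m 𝕜} {g : 𝕜 → Matrix m n 𝕜}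
    {f' : Matrix l m 𝕜} {g' : Matrix m n 𝕜} (hf : HasDerivAt f f' x) (hg : HasDerivAt g g' x) :
    HasDerivAt (fun t => f t * g t) (f' * g x + f x * g') x := by
  let B : Matrix l m 𝕜 →L[𝕜] Matrix m n 𝕜 →L[𝕜] Matrix l n 𝕜 :=
    LinearMap.toContinuousLinearMap
      (LinearMap.toContinuousLinearMap.toLinearMap ∘ₗ mulLinearMap 𝕜)
  have := B.hasDerivWithinAt_of_bilinear (s := Set.univ) hf.hasDerivWithinAt hg.hasDerivWithinAt
  rwa [hasDerivWithinAt_univ, add_comm] at this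

theorem HasDerivAt.matrix_mul_const {f : 𝕜 → Matrix l m 𝕜} {f' : Matrix l m 𝕜}
    (hf : HasDerivAt f f' x) (B : Matrix m n 𝕜) :
    HasDerivAt (fun t => f t * B) (f' * B) x := by
  simpa using hf.matrix_mul (hasDerivAt_const x B)

theorem HasDerivAt.const_matrix_mul {f : 𝕜 → Matrix m n 𝕜} {f' : Matrix m n 𝕜}
    (B : Matrix l m 𝕜) (hf : HasDerivAt f f' x) :
    HasDerivAt (fun t => B * f t) (B * f') x := by
  simpa using (hasDerivAt_const x B).matrix_mul hf

theorem HasDerivAt.matrix_inv [DecidableEq n] {f : 𝕜 → Matrix n n 𝕜} {f' : Matrix n n 𝕜}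
    (hf : HasDerivAt f f' x) (hx : IsUnit (f x)) :
    HasDerivAt (fun t => (f t)⁻¹) (-((f x)⁻¹ * f' * (f x)⁻¹)) x := by
  have := (hasFDerivAt_ringInverse (𝕜 := 𝕜) hx.unit).comp_hasDerivAt x hf
  simp only [Function.comp_def, ← nonsing_inv_eq_ringInverse, coe_units_inv, IsUnit.unit_spec,
    _root_.neg_apply, ContinuousLinearMap.mulLeftRight_apply] at this
  exact this

theorem Matrix.hasDerivAt_add_smul (A B : Matrix m n 𝕜) (x : 𝕜) :
    HasDerivAt (fun t => A + t • B) B x := by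
  have := ((hasDerivAt_id x).smul_const B).const_add A
  simp only [id, one_smul] at this
  exact this

theorem HasDerivAt.matrix_trace {f : 𝕜 → Matrix n n 𝕜} {f' : Matrix n n 𝕜}
    (hf : HasDerivAt f f' x) : HasDerivAt (fun t => (f t).trace) f'.trace x :=
  (traceLinearMap n 𝕜 𝕜).toContinuousLinearMap.hasFDerivAt.comp_hasDerivAt x hf

end MatrixCalculus

namespace Matrix

section PositiveTrace

open scoped MatrixOrder ComplexOrder

variable {𝕜 n : Type*} [RCLike 𝕜] [Fintype n] [DecidableEq n] {S T : Matrix n n 𝕜}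

theorem PosSemidef.trace_mul_nonneg (hS : S.PosSemidef) (hT : T.PosSemidef) :
    0 ≤ (S * T).trace := by
  -- `tr (S Bᴴ B) = tr (B S Bᴴ)`
  obtain ⟨B, rfl⟩ := CStarAlgebra.nonneg_iff_eq_star_mul_self.mp hT.nonneg
  rw [star_eq_conjTranspose, ← Matrix.mul_assoc, trace_mul_comm]
  simpa [Matrix.mul_assoc] using (hS.mul_mul_conjTranspose_same B).trace_nonneg

theorem PosDef.trace_mul_eq_zero_iff (hS : S.PosDef) (hT : T.PosSemidef) :
    (S * T).trace = 0 ↔ T = 0 := by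
  obtain ⟨B, rfl⟩ := CStarAlgebra.nonneg_iff_eq_star_mul_self.mp hT.nonneg
  obtain ⟨C, hC, rfl⟩ := CStarAlgebra.isStrictlyPositive_iff_eq_star_mul_self.mp
    hS.isStrictlyPositive
  -- `tr (Cᴴ C Bᴴ B) = tr ((C Bᴴ) (C Bᴴ)ᴴ)` and `C` is invertible
  have hCB : B * Cᴴ = (C * Bᴴ)ᴴ := by rw [conjTranspose_mul, conjTranspose_conjTranspose]
  simp only [star_eq_conjTranspose]
  rw [Matrix.mul_assoc, trace_mul_comm, Matrix.mul_assoc, Matrix.mul_assoc, ← Matrix.mul_assoc,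
    hCB, trace_mul_conjTranspose_self_eq_zero_iff, hC.mul_right_eq_zero,
    conjTranspose_mul_self_eq_zero, conjTranspose_eq_zero]

theorem PosDef.conjTranspose_mul_mul_same_eq_zero_iff {p : Type*} [Fintype p] (hS : S.PosDef)
    (M : Matrix n p 𝕜) : Mᴴ * S * M = 0 ↔ M = 0 := by
  refine ⟨fun h => ?_, fun h => by simp [h]⟩
  have htr : (S * (M * Mᴴ)).trace = 0 := by
    rw [← Matrix.mul_assoc, trace_mul_comm, ← Matrix.mul_assoc, h, trace_zero]
  rwa [hS.trace_mul_eq_zero_iff (posSemidef_self_mul_conjTranspose M),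
    self_mul_conjTranspose_eq_zero] at htr

end PositiveTrace

theorem IsHermitian.transpose_eq {R n : Type*} [Star R] [TrivialStar R] {A : Matrix n n R}
    (hA : A.IsHermitian) : Aᵀ = A := by
  rw [← conjTranspose_eq_transpose_of_trivial]
  exact hA

section Symmetric

theorem IsSymm.mul_mul_transpose {R m n : Type*} [CommSemiring R] [Fintype n] {A : Matrix n n R}
    (hA : A.IsSymm) (B : Matrix m n R) : (B * A * Bᵀ).IsSymm := by
  rw [IsSymm, transpose_mul, transpose_mul, transpose_transpose, hA.eq, Matrix.mul_assoc]

variable (R n : Type*) [CommRing R]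

def symmetricSubmodule : Submodule R (Matrix n n R) where
  carrier := {A | A.IsSymm}
  add_mem' := IsSymm.add
  zero_mem' := isSymm_zero
  smul_mem' c _ hA := hA.smul c

variable {R n}

@[simp] theorem mem_symmetricSubmodule {A : Matrix n n R} :
    A ∈ symmetricSubmodule R n ↔ A.IsSymm := Iff.rfl

def symmetricSubmoduleEquivSym2 : symmetricSubmodule R n ≃ₗ[R] (Sym2 n → R) where
  toFun A := Sym2.lift ⟨fun i j => A.1 i j, fun i j => (A.2.apply i j).symm⟩
  invFun f := ⟨of fun i j => f s(i, j), by ext i j; simp [Sym2.eq_swap]⟩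
  map_add' _ _ := by ext z; induction z using Sym2.ind; simp
  map_smul' _ _ := by ext z; induction z using Sym2.ind; simp
  left_inv _ := by ext; simp
  right_inv _ := by ext z; induction z using Sym2.ind; simp

theorem finrank_symmetricSubmodule {R : Type*} [Field R] [Fintype n] [DecidableEq n] :
    Module.finrank R (symmetricSubmodule R n) = Fintype.card n * (Fintype.card n + 1) / 2 := by
  rw [symmetricSubmoduleEquivSym2.finrank_eq, Module.finrank_fintype_fun_eq_card, Sym2.card,
    Nat.choose_two_right, Nat.mul_comm]
  rfl

end Symmetric

section Idempotent

variable {R n : Type*} [Field R] [Fintype n] [DecidableEq n] {P : Matrix n n R}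

theorem isIdempotentElem_toLin' (hP : IsIdempotentElem P) : IsIdempotentElem (toLin' P) := by
  rw [IsIdempotentElem, Module.End.mul_eq_comp, ← toLin'_mul, hP.eq]

theorem rank_eq_trace_of_isIdempotentElem [CharZero R] (hP : IsIdempotentElem P) :
    (P.rank : R) = P.trace := by
  rw [rank, ← toLin'_apply',
    ← (LinearMap.IsIdempotentElem.isProj_range _ (isIdempotentElem_toLin' hP)).trace,
    LinearMap.trace_eq_matrix_trace R (Pi.basisFun R n), LinearMap.toMatrix_eq_toMatrix',
    LinearMap.toMatrix'_toLin']

theorem exists_mul_eq_and_mul_eq_one_of_isIdempotentElem (hP : IsIdempotentElem P) :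
    ∃ (U : Matrix n (Fin P.rank) R) (L : Matrix (Fin P.rank) n R), U * L = P ∧ L * U = 1 := by
  let W := LinearMap.range P.mulVecLin
  let b : W ≃ₗ[R] (Fin P.rank → R) := (Module.finBasisOfFinrankEq R W rfl).equivFun
  refine ⟨LinearMap.toMatrix' (W.subtype ∘ₗ b.symm.toLinearMap),
    LinearMap.toMatrix' (b.toLinearMap ∘ₗ P.mulVecLin.rangeRestrict), ?_, ?_⟩
  · apply toLin'.injective
    refine LinearMap.ext fun x => ?_
    simp [toLin'_mul]
  · have hW : ∀ w : W, P.mulVecLin.rangeRestrict w = w := by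
      rintro ⟨_, z, rfl⟩
      ext1
      simp [mulVec_mulVec, hP.eq]
    apply toLin'.injective
    refine LinearMap.ext fun y => ?_
    simp [toLin'_mul, hW]

theorem finrank_symmetricSubmodule_inf_ker_mulLeft_one_sub_mul {r : ℕ} {U : Matrix n (Fin r) R}
    {L : Matrix (Fin r) n R} (hLU : L * U = 1) :
    Module.finrank R ↥(symmetricSubmodule R n ⊓ LinearMap.ker (mulLeftLinearMap n R (1 - U * L))) =
      r * (r + 1) / 2 := by
  let φ : Matrix (Fin r) (Fin r) R →ₗ[R] Matrix n n R :=
    { toFun S := U * S * Uᵀ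
      map_add' S T := by rw [Matrix.mul_add, Matrix.add_mul]
      map_smul' c S := by rw [Matrix.mul_smul, Matrix.smul_mul, RingHom.id_apply] }
  have hφ : ∀ S, L * φ S * Lᵀ = S := fun S => by
    change L * (U * S * Uᵀ) * Lᵀ = S
    rw [← Matrix.mul_assoc, ← Matrix.mul_assoc, hLU, Matrix.one_mul, Matrix.mul_assoc,
      ← transpose_mul, hLU, transpose_one, Matrix.mul_one]
  have hmap : symmetricSubmodule R n ⊓ LinearMap.ker (mulLeftLinearMap n R (1 - U * L)) =
      (symmetricSubmodule R (Fin r)).map φ := by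
    ext H
    simp only [Submodule.mem_inf, mem_symmetricSubmodule, LinearMap.mem_ker,
      mulLeftLinearMap_apply, Submodule.mem_map, sub_mul, Matrix.one_mul, sub_eq_zero]
    constructor
    · rintro ⟨hH, hHUL⟩
      have hULH := hHUL.symm
      refine ⟨L * H * Lᵀ, hH.mul_mul_transpose L, ?_⟩
      calc φ (L * H * Lᵀ) = U * L * H * (U * L)ᵀ := by
            simp only [φ, LinearMap.coe_mk, AddHom.coe_mk, transpose_mul, Matrix.mul_assoc]
        _ = (U * L * H)ᵀ := by rw [transpose_mul (U * L) H, hH.eq, hULH]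
        _ = H := by rw [hULH, hH.eq]
    · rintro ⟨S, hS, rfl⟩
      refine ⟨hS.mul_mul_transpose U, ?_⟩
      change U * S * Uᵀ = U * L * (U * S * Uᵀ)
      rw [Matrix.mul_assoc U L, ← Matrix.mul_assoc L, ← Matrix.mul_assoc L, hLU, Matrix.one_mul,
        Matrix.mul_assoc]
  rw [hmap, ← (Submodule.equivMapOfInjective φ (fun S T h => by rw [← hφ S, h, hφ]) _).finrank_eq,
    finrank_symmetricSubmodule, Fintype.card_fin]

theorem finrank_symmetricSubmodule_inf_ker_mulLeft {E : Matrix n n R} (hE : IsIdempotentElem E) :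
    Module.finrank R ↥(symmetricSubmodule R n ⊓ LinearMap.ker (mulLeftLinearMap n R E)) =
      (1 - E).rank * ((1 - E).rank + 1) / 2 := by
  obtain ⟨U, L, hUL, hLU⟩ := exists_mul_eq_and_mul_eq_one_of_isIdempotentElem hE.one_sub
  have := finrank_symmetricSubmodule_inf_ker_mulLeft_one_sub_mul hLU
  rwa [hUL, sub_sub_cancel] at this

end Idempotent

end Matrix

section ObliqueProjection

variable {R n p : Type*} [Field R] [Fintype n] [Fintype p] [DecidableEq p]
  {K : Matrix n p R} {Y : Matrix n n R}

/-- For invertible `Kᵀ Y K`, the projection onto the column space of `K` with kernel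
`ker (Kᵀ Y)`. -/
def obliqueProj (K : Matrix n p R) (Y : Matrix n n R) : Matrix n n R :=
  K * (Kᵀ * Y * K)⁻¹ * Kᵀ * Y

theorem isIdempotentElem_obliqueProj (hA : IsUnit (Kᵀ * Y * K)) :
    IsIdempotentElem (obliqueProj K Y) := by
  have hAA : (Kᵀ * Y * K)⁻¹ * (Kᵀ * Y * K) = 1 :=
    nonsing_inv_mul _ ((isUnit_iff_isUnit_det _).mp hA)
  calc obliqueProj K Y * obliqueProj K Y
      = K * ((Kᵀ * Y * K)⁻¹ * (Kᵀ * Y * K)) * (Kᵀ * Y * K)⁻¹ * Kᵀ * Y := by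
        simp only [obliqueProj, Matrix.mul_assoc]
    _ = obliqueProj K Y := by rw [hAA, Matrix.mul_one, obliqueProj]

theorem trace_obliqueProj (hA : IsUnit (Kᵀ * Y * K)) :
    (obliqueProj K Y).trace = Fintype.card p := by
  rw [obliqueProj, Matrix.mul_assoc, Matrix.mul_assoc, trace_mul_comm, Matrix.mul_assoc,
    nonsing_inv_mul _ ((isUnit_iff_isUnit_det _).mp hA), trace_one]

theorem rank_one_sub_obliqueProj [DecidableEq n] [CharZero R] (hA : IsUnit (Kᵀ * Y * K)) :
    (1 - obliqueProj K Y).rank = Fintype.card n - Fintype.card p := by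
  have h := rank_eq_trace_of_isIdempotentElem (isIdempotentElem_obliqueProj hA).one_sub
  rw [trace_sub, trace_one, trace_obliqueProj hA, eq_sub_iff_add_eq] at h
  have : (1 - obliqueProj K Y).rank + Fintype.card p = Fintype.card n := by exact_mod_cast h
  omega

theorem ker_mulLeftLinearMap_transpose_mul (hA : IsUnit (Kᵀ * Y * K)) :
    LinearMap.ker (mulLeftLinearMap n R (Kᵀ * Y)) =
      LinearMap.ker (mulLeftLinearMap n R (obliqueProj K Y)) := by
  have hAA : Kᵀ * Y * K * (Kᵀ * Y * K)⁻¹ = 1 :=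
    mul_nonsing_inv _ ((isUnit_iff_isUnit_det _).mp hA)
  ext H
  simp only [LinearMap.mem_ker, mulLeftLinearMap_apply, obliqueProj]
  constructor
  · intro h
    simp only [Matrix.mul_assoc] at h ⊢
    simp [h]
  · intro h
    calc Kᵀ * Y * H = Kᵀ * Y * K * (Kᵀ * Y * K)⁻¹ * Kᵀ * Y * H := by rw [hAA, Matrix.one_mul]
      _ = Kᵀ * Y * (K * (Kᵀ * Y * K)⁻¹ * Kᵀ * Y * H) := by simp only [Matrix.mul_assoc]
      _ = 0 := by rw [h, Matrix.mul_zero]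

end ObliqueProjection

section DCriterion

variable {n p : Type*} [Fintype n] [Fintype p] [DecidableEq p]
  {K : Matrix n p ℝ} {Y H : Matrix n n ℝ}

/-- `D1D K X H = -tr (dProj K X⁻¹ * H)` by definition, so `-dProj K X⁻¹` is the gradient of
`Φ_D` at `X`. -/
def dProj (K : Matrix n p ℝ) (Y : Matrix n n ℝ) : Matrix n n ℝ :=
  Y * K * (Kᵀ * Y * K)⁻¹ * Kᵀ * Y

theorem hasDerivAt_dProj_inv_add_smul [DecidableEq n] (K : Matrix n p ℝ) {X : Matrix n n ℝ}
    (H : Matrix n n ℝ) (hX : IsUnit X) (hA : IsUnit (Kᵀ * X⁻¹ * K)) :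
    HasDerivAt (fun t : ℝ => dProj K (X + t • H)⁻¹)
      (dProj K X⁻¹ * H * dProj K X⁻¹ - X⁻¹ * H * dProj K X⁻¹ - dProj K X⁻¹ * H * X⁻¹) 0 := by
  have hinv : HasDerivAt (fun t : ℝ => (X + t • H)⁻¹) (-(X⁻¹ * H * X⁻¹)) 0 := by
    have := (hasDerivAt_add_smul X H 0).matrix_inv (by simpa using hX)
    simpa using this
  have hAinv := ((hinv.const_matrix_mul Kᵀ).matrix_mul_const K).matrix_inv (by simpa using hA)
  have := (((hinv.matrix_mul_const K).matrix_mul hAinv).matrix_mul_const Kᵀ).matrix_mul hinv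
  simp only [zero_smul, add_zero] at this
  unfold dProj
  convert this using 1
  simp only [Matrix.neg_mul, Matrix.mul_neg, neg_neg, Matrix.add_mul, Matrix.mul_assoc]
  abel

/-- `D²Φ_D(X)[H,H]` at `Y = X⁻¹`, arranged as a sum of traces of products of positive
semidefinite matrices. -/
def hessianForm (K : Matrix n p ℝ) (Y H : Matrix n n ℝ) : ℝ :=
  (Y * (H * dProj K Y * H)).trace + ((Y - dProj K Y) * (H * dProj K Y * H)).trace

theorem hasDerivAt_D1D {m k : ℕ} (K : Matrix (Fin m) (Fin k) ℝ) {X : Matrix (Fin m) (Fin m) ℝ}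
    (H : Matrix (Fin m) (Fin m) ℝ) (hX : IsUnit X) (hA : IsUnit (Kᵀ * X⁻¹ * K)) :
    HasDerivAt (fun t : ℝ => D1D K (X + t • H) H) (hessianForm K X⁻¹ H) 0 := by
  refine ((hasDerivAt_dProj_inv_add_smul K H hX hA).matrix_mul_const H).matrix_trace.neg
    |>.congr_deriv ?_
  have hcycle : (dProj K X⁻¹ * H * X⁻¹ * H).trace = (X⁻¹ * (H * dProj K X⁻¹ * H)).trace := by
    rw [Matrix.mul_assoc, trace_mul_comm]
    simp only [Matrix.mul_assoc]
  rw [hessianForm, Matrix.sub_mul, Matrix.sub_mul, Matrix.sub_mul, trace_sub, trace_sub, trace_sub,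
    hcycle]
  simp only [Matrix.mul_assoc]
  ring

theorem mul_dProj_mul_eq (hY : Y.IsSymm) (hH : H.IsSymm) :
    H * dProj K Y * H = (Kᵀ * Y * H)ᵀ * (Kᵀ * Y * K)⁻¹ * (Kᵀ * Y * H) := by
  simp only [dProj, transpose_mul, transpose_transpose, hY.eq, hH.eq, Matrix.mul_assoc]

theorem posSemidef_mul_dProj_mul (hY : Y.PosDef) (hA : (Kᵀ * Y * K).PosDef) (hH : H.IsSymm) :
    (H * dProj K Y * H).PosSemidef := by
  rw [mul_dProj_mul_eq hY.isHermitian.transpose_eq hH, ← conjTranspose_eq_transpose_of_trivial]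
  exact hA.inv.posSemidef.conjTranspose_mul_mul_same _

theorem posSemidef_sub_dProj [DecidableEq n] (hY : Y.PosDef) (hA : (Kᵀ * Y * K).PosDef) :
    (Y - dProj K Y).PosSemidef := by
  set E := obliqueProj K Y
  have hYE : Y * E = dProj K Y := by simp only [E, obliqueProj, dProj, Matrix.mul_assoc]
  have hEY : Eᵀ * Y = dProj K Y := by
    simp only [E, obliqueProj, dProj, transpose_mul, transpose_transpose, transpose_nonsing_inv,
      hY.isHermitian.transpose_eq, Matrix.mul_assoc]
  have hconj : (1 - E)ᵀ * Y * (1 - E) = Y - dProj K Y :=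
    calc (1 - E)ᵀ * Y * (1 - E) = Y - Eᵀ * Y - Y * E + Eᵀ * Y * E := by
          rw [transpose_sub, transpose_one]
          noncomm_ring
      _ = Y - dProj K Y := by
          rw [hEY, ← hYE, Matrix.mul_assoc, (isIdempotentElem_obliqueProj hA.isUnit).eq]
          abel
  rw [← hconj, ← conjTranspose_eq_transpose_of_trivial]
  exact hY.posSemidef.conjTranspose_mul_mul_same _

theorem hessianForm_nonneg [DecidableEq n] (hY : Y.PosDef) (hA : (Kᵀ * Y * K).PosDef)
    (hH : H.IsSymm) :
    0 ≤ hessianForm K Y H :=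
  add_nonneg (hY.posSemidef.trace_mul_nonneg (posSemidef_mul_dProj_mul hY hA hH))
    ((posSemidef_sub_dProj hY hA).trace_mul_nonneg (posSemidef_mul_dProj_mul hY hA hH))

theorem hessianForm_eq_zero_iff [DecidableEq n] (hY : Y.PosDef) (hA : (Kᵀ * Y * K).PosDef)
    (hH : H.IsSymm) :
    hessianForm K Y H = 0 ↔ Kᵀ * Y * H = 0 := by
  have hHPH := posSemidef_mul_dProj_mul hY hA hH
  calc hessianForm K Y H = 0 ↔ (Y * (H * dProj K Y * H)).trace = 0 ∧
        ((Y - dProj K Y) * (H * dProj K Y * H)).trace = 0 :=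
        add_eq_zero_iff_of_nonneg (hY.posSemidef.trace_mul_nonneg hHPH)
          ((posSemidef_sub_dProj hY hA).trace_mul_nonneg hHPH)
    _ ↔ H * dProj K Y * H = 0 :=
        ⟨fun h => (hY.trace_mul_eq_zero_iff hHPH).1 h.1, fun h => by simp [h]⟩
    _ ↔ Kᵀ * Y * H = 0 := by
        rw [mul_dProj_mul_eq hY.isHermitian.transpose_eq hH,
          ← conjTranspose_eq_transpose_of_trivial, hA.inv.conjTranspose_mul_mul_same_eq_zero_iff]

end DCriterion

theorem D_criterion_hessian_nullspace_general (m k : ℕ)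
    (K : Matrix (Fin m) (Fin k) ℝ) (hK : K.rank = k)
    (X : Matrix (Fin m) (Fin m) ℝ) (hX : X.PosDef) :
    (∀ H : Matrix (Fin m) (Fin m) ℝ, H.IsSymm →
      ∃ q : ℝ, HasDerivAt (fun t : ℝ => D1D K (X + t • H) H) q 0 ∧
        0 ≤ q ∧ (q = 0 ↔ Kᵀ * X⁻¹ * H = 0)) ∧
    ∃ V : Submodule ℝ (Matrix (Fin m) (Fin m) ℝ),
      (V : Set (Matrix (Fin m) (Fin m) ℝ)) =
        {H | H.IsSymm ∧ deriv (fun t : ℝ => D1D K (X + t • H) H) 0 = 0} ∧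
      Module.finrank ℝ V = (m - k) * (m - k + 1) / 2 := by
  have hKinj : Function.Injective K.mulVec := mulVec_injective_iff.mpr <|
    linearIndependent_iff_card_eq_finrank_span.mpr <|
      (Fintype.card_fin k).trans (hK.symm.trans (rank_eq_finrank_span_cols K))
  have hA : (Kᵀ * X⁻¹ * K).PosDef := by
    simpa only [conjTranspose_eq_transpose_of_trivial] using
      hX.inv.conjTranspose_mul_mul_same hKinj
  have hD := fun H => hasDerivAt_D1D K H hX.isUnit hA.isUnit
  refine ⟨fun H hH => ⟨_, hD H, hessianForm_nonneg hX.inv hA hH,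
    hessianForm_eq_zero_iff hX.inv hA hH⟩,
    symmetricSubmodule ℝ (Fin m) ⊓ LinearMap.ker (mulLeftLinearMap (Fin m) ℝ (Kᵀ * X⁻¹)), ?_, ?_⟩
  · ext H
    simp only [Submodule.coe_inf, Set.mem_inter_iff, SetLike.mem_coe, mem_symmetricSubmodule,
      LinearMap.mem_ker, mulLeftLinearMap_apply, Set.mem_ofPred_eq, (hD H).deriv]
    exact and_congr_right fun hH => (hessianForm_eq_zero_iff hX.inv hA hH).symm
  · rw [ker_mulLeftLinearMap_transpose_mul hA.isUnit,
      finrank_symmetricSubmodule_inf_ker_mulLeft (isIdempotentElem_obliqueProj hA.isUnit),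
      rank_one_sub_obliqueProj hA.isUnit, Fintype.card_fin, Fintype.card_fin]

/-- For `Φ_D(X) = log det (Kᵀ X⁻¹ K)` and symmetric positive definite `X`, the second
derivative quadratic form `H ↦ D²Φ_D(X)[H,H]` (the derivative at `0` of
`t ↦ DΦ_D(X + tH)[H]`) is nonnegative on symmetric matrices, vanishes iff `Kᵀ X⁻¹ H = 0`,
and its null space is a linear subspace of `S^m` of dimension `(m-k)(m-k+1)/2`;
equivalently the Hessian has rank `m(m+1)/2 - (m-k)(m-k+1)/2`. -/
theorem D_criterion_hessian_nullspace (m k : ℕ) (hm : 1 ≤ m) (hk : 1 ≤ k) (hkm : k ≤ m)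
    (K : Matrix (Fin m) (Fin k) ℝ) (hK : K.rank = k)
    (X : Matrix (Fin m) (Fin m) ℝ) (hX : X.PosDef) :
    (∀ H : Matrix (Fin m) (Fin m) ℝ, H.IsSymm →
      ∃ q : ℝ, HasDerivAt (fun t : ℝ => D1D K (X + t • H) H) q 0 ∧
        0 ≤ q ∧ (q = 0 ↔ Kᵀ * X⁻¹ * H = 0)) ∧
    ∃ V : Submodule ℝ (Matrix (Fin m) (Fin m) ℝ),
      (V : Set (Matrix (Fin m) (Fin m) ℝ)) =
        {H | H.IsSymm ∧ deriv (fun t : ℝ => D1D K (X + t • H) H) 0 = 0} ∧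
      Module.finrank ℝ V = (m - k) * (m - k + 1) / 2 :=
  D_criterion_hessian_nullspace_general m k K hK X hX
end
end

section
/- Let a, b be positive real numbers with a ≠ b, and let q ∈ (0,1). Then a^{-1} b^{-q} ≥ −(a^{-q} − b^{-q})/(a − b). -/
/-! With `t = b / a` the left-hand side factors as `a⁻¹ b^{-q} · (1 - t^q) / (1 - t)`, and for
`q ≤ 1` the power `t^q` lies between `t` and `1`, so the last factor is at most `1`. -/

open Real

theorem one_sub_rpow_div_one_sub_le_one {t q : ℝ} (ht : 0 ≤ t) (ht1 : t ≠ 1) (hq : q ≤ 1) :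
    (1 - t ^ q) / (1 - t) ≤ 1 := by
  rcases ht1.lt_or_gt with hlt | hgt
  · rw [div_le_one (sub_pos.2 hlt)]
    linarith [self_le_rpow_of_le_one ht hlt.le hq]
  · rw [div_le_one_of_neg (sub_neg.2 hgt)]
    linarith [rpow_le_self_of_one_le hgt.le hq]

theorem rpow_difference_quotient_bound_general (a b q : ℝ) (ha : 0 < a) (hb : 0 < b) (hab : a ≠ b)
    (hq1 : q < 1) :
    -((a ^ (-q) - b ^ (-q)) / (a - b)) ≤ a ^ (-1 : ℝ) * b ^ (-q) := by
  have hratio : b / a ≠ 1 := fun h => hab ((div_eq_one_iff_eq ha.ne').1 h).symm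
  have hscale : -((a ^ (-q) - b ^ (-q)) / (a - b)) =
      a ^ (-1 : ℝ) * b ^ (-q) * ((1 - (b / a) ^ q) / (1 - b / a)) := by
    have hsub : a - b ≠ 0 := sub_ne_zero.2 hab
    have haq : a ^ q ≠ 0 := (rpow_pos_of_pos ha q).ne'
    have hbq : b ^ q ≠ 0 := (rpow_pos_of_pos hb q).ne'
    rw [rpow_neg ha.le, rpow_neg hb.le, rpow_neg_one, div_rpow hb.le ha.le]
    field_simp
    ring
  rw [hscale]
  exact mul_le_of_le_one_right (by positivity)
    (one_sub_rpow_div_one_sub_le_one (div_pos hb ha).le hratio hq1.le)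

/-- For positive reals `a ≠ b` and `q ∈ (0,1)`,
`a⁻¹ b^{-q} ≥ -(a^{-q} - b^{-q})/(a - b)`. -/
theorem rpow_difference_quotient_bound (a b q : ℝ) (ha : 0 < a) (hb : 0 < b) (hab : a ≠ b)
    (hq0 : 0 < q) (hq1 : q < 1) :
    -((a ^ (-q) - b ^ (-q)) / (a - b)) ≤ a ^ (-1 : ℝ) * b ^ (-q) :=
  rpow_difference_quotient_bound_general a b q ha hb hab hq1
end
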